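/- arXiv:2601.07938 — 2 statements merged into one kernel-verified Lean document; each statement's English description precedes it below -/
import Mathlib

section
/- The number of rooted forests on {1,...,n} in which exactly n−1 of the n vertices are records equals Σ_{m=1}^{n} (n−m)·c(n,m), the sum of reflection lengths of all permutations in S_n. -/
/-!
A forest with a single non-record `u` is a map that weakly decreases everywhere except at `u`,
which it sends up to some `a > u`, while no vertex of `(u, a]` is sent back to `u`. For fixed
`u < a` the vertices choose their images independently, giving `n! / (a + 1)` such maps
(0-indexed), so the forests are counted by `∑ₐ a · n! / (a + 1)`.

On the permutation side, `n` minus the number of cycles counts the vertices that are not the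
largest of their cycle. The first vertex `≥ v` met on the orbit of `v` after `v` is uniformly
distributed on `{w | v ≤ w}`, because left multiplication by the transposition `(v w)` exchanges
the permutations where it is `v` with those where it is `w`. Hence `v` is a cycle maximum in
`n! / (n - v)` permutations, and summing over `v` gives the same total.
-/

def IsForestFun {n : ℕ} (f : Fin n → Fin n) : Prop :=
  ∀ v, ∃ k, f (f^[k] v) = f^[k] v

def IsRec {n : ℕ} (f : Fin n → Fin n) (v : Fin n) : Prop :=
  ∀ k, f^[k] v ≤ v

noncomputable def cyclesCount {n : ℕ} (π : Equiv.Perm (Fin n)) : ℕ :=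
  π.cycleType.card + (n - π.support.card)

/-- Unsigned Stirling numbers of the first kind. -/
noncomputable def stirC (n m : ℕ) : ℕ :=
  Nat.card {π : Equiv.Perm (Fin n) // cyclesCount π = m}

namespace ForestRecords

open Finset Function Equiv Classical
open scoped Nat

theorem sub_div_eq_mul_div {N k : ℕ} (h : k + 1 ∣ N) : N - N / (k + 1) = k * (N / (k + 1)) := by
  obtain ⟨q, rfl⟩ := h
  rw [Nat.mul_div_cancel_left _ k.succ_pos, add_mul, one_mul, Nat.add_sub_cancel]

section OneAscent

variable {n : ℕ} {f : Fin n → Fin n} {u a v : Fin n}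

structure IsOneAscent (f : Fin n → Fin n) (u a : Fin n) : Prop where
  lt : u < a
  apply_self : f u = a
  apply_le : ∀ v, v ≠ u → f v ≤ v
  apply_ne : ∀ w, u < w → w ≤ a → f w ≠ u

theorem isRec_of_iterate_eq {w : Fin n} {j : ℕ} (hj : f^[j] v = w)
    (hle : ∀ i < j, f^[i] v ≤ v) (hwv : w ≤ v) (hw : IsRec f w) : IsRec f v := by
  intro k
  rcases lt_or_ge k j with hk | hk
  · exact hle k hk
  · obtain ⟨i, rfl⟩ := Nat.exists_eq_add_of_le hk
    rw [add_comm, iterate_add_apply, hj]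
    exact (hw i).trans hwv

theorem exists_fixed_of_iterate_eq {w : Fin n} {j : ℕ} (hj : f^[j] v = w)
    (hw : ∃ k, f (f^[k] w) = f^[k] w) : ∃ k, f (f^[k] v) = f^[k] v := by
  obtain ⟨k, hk⟩ := hw
  exact ⟨k + j, by rwa [iterate_add_apply, hj]⟩

theorem IsOneAscent.isRec_and_exists_fixed (h : IsOneAscent f u a) (v : Fin n) (hv : v ≠ u) :
    IsRec f v ∧ ∃ k, f (f^[k] v) = f^[k] v := by
  induction v using WellFoundedLT.induction with
  | _ v ih =>
  rcases (h.apply_le v hv).eq_or_lt with hfix | hlt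
  · exact ⟨fun k => (iterate_fixed hfix k).le, 0, hfix⟩
  by_cases hfv : f v = u
  · -- the walk from `v` passes through `u` and jumps to `a`, which lies below `v`
    have hav : a < v := lt_of_not_ge fun hva => h.apply_ne v (hfv ▸ hlt) hva hfv
    have h2 : f^[2] v = a := by simp [hfv, h.apply_self]
    obtain ⟨hrec, hfixed⟩ := ih a hav h.lt.ne'
    refine ⟨isRec_of_iterate_eq h2 (fun i hi => ?_) hav.le hrec,
      exists_fixed_of_iterate_eq h2 hfixed⟩
    interval_cases i
    exacts [le_rfl, hlt.le]
  · obtain ⟨hrec, hfixed⟩ := ih (f v) hlt hfv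
    have h1 : f^[1] v = f v := rfl
    refine ⟨isRec_of_iterate_eq h1 (fun i hi => ?_) hlt.le hrec,
      exists_fixed_of_iterate_eq h1 hfixed⟩
    obtain rfl : i = 0 := by omega
    exact le_rfl

theorem IsOneAscent.isRec_iff (h : IsOneAscent f u a) : IsRec f v ↔ v ≠ u := by
  refine ⟨?_, fun hv => (h.isRec_and_exists_fixed v hv).1⟩
  rintro hrec rfl
  have hfv : f v ≤ v := hrec 1
  exact (h.apply_self ▸ hfv).not_gt h.lt

theorem IsOneAscent.isForestFun (h : IsOneAscent f u a) : IsForestFun f := by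
  intro v
  by_cases hv : v = u
  · subst hv
    exact exists_fixed_of_iterate_eq (j := 1) h.apply_self
      (h.isRec_and_exists_fixed a h.lt.ne').2
  · exact (h.isRec_and_exists_fixed v hv).2

theorem IsOneAscent.card_isRec (h : IsOneAscent f u a) :
    Nat.card {v : Fin n // IsRec f v} = n - 1 := by
  rw [Nat.card_congr (Equiv.subtypeEquivRight fun v => h.isRec_iff), Nat.card_eq_fintype_card,
    Fintype.card_subtype_compl, Fintype.card_subtype_eq, Fintype.card_fin]

theorem IsOneAscent.unique {u' a' : Fin n} (h : IsOneAscent f u a) (h' : IsOneAscent f u' a') :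
    u = u' ∧ a = a' := by
  have hu : u = u' := by simpa using (h.isRec_iff (v := u)).symm.trans h'.isRec_iff
  subst hu
  exact ⟨rfl, h.apply_self.symm.trans h'.apply_self⟩

theorem isOneAscent_of_isForestFun (hF : IsForestFun f) (hu : ¬ IsRec f u)
    (hrec : ∀ v, v ≠ u → IsRec f v) : IsOneAscent f u (f u) := by
  have hle : ∀ v, v ≠ u → f v ≤ v := fun v hv => hrec v hv 1
  have hlt : u < f u := by
    refine lt_of_not_ge fun hfu => hu fun k => iterate_le_id_of_le_id (fun v => ?_) k u
    by_cases hv : v = u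
    exacts [hv ▸ hfu, hle v hv]
  refine ⟨hlt, rfl, hle, fun w huw hwa hwu => ?_⟩
  have h2 : f^[2] w = f u := by simp [hwu]
  rcases hwa.lt_or_eq with hwa | rfl
  · exact (hrec w huw.ne' 2).not_gt (h2 ▸ hwa)
  · -- `u ↦ f u ↦ u` is a 2-cycle, so the walk from `u` never reaches a fixed point
    obtain ⟨k, hk⟩ := hF u
    have hper : f^[2] u = u := by simp [hwu]
    have : u = f^[k] u := by
      rw [← iterate_fixed hk k, ← iterate_add_apply, ← two_mul, iterate_mul, iterate_fixed hper]
    exact hlt.ne (by rw [this, hk])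

theorem isForestFun_and_card_isRec_iff (hn : 1 ≤ n) :
    (IsForestFun f ∧ Nat.card {v : Fin n // IsRec f v} = n - 1) ↔ ∃ u a, IsOneAscent f u a := by
  refine ⟨fun ⟨hF, hcard⟩ => ?_, fun ⟨u, a, h⟩ => ⟨h.isForestFun, h.card_isRec⟩⟩
  have hone : Fintype.card {v : Fin n // ¬ IsRec f v} = 1 := by
    rw [Fintype.card_subtype_compl, Fintype.card_fin, ← Nat.card_eq_fintype_card, hcard]
    omega
  obtain ⟨⟨u, hu⟩, huniq⟩ := Fintype.card_eq_one_iff.mp hone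
  refine ⟨u, f u, isOneAscent_of_isForestFun hF hu fun v hv => ?_⟩
  by_contra hnot
  exact hv (congrArg Subtype.val (huniq ⟨v, hnot⟩))

theorem mul_prod_ascent_choices {u a : ℕ} (hua : u < a) (ha : a < n) :
    (a + 1) * ∏ i ∈ range n, (if i = u then 1 else if u < i ∧ i ≤ a then i else i + 1) = n ! := by
  -- drop the factor `1` at `u`; shifting `(u, a]` down by one turns the rest into `j + 1`, `j ≠ a`
  rw [← prod_erase (range n) (a := u) (by simp), ← prod_range_add_one_eq_factorial,
    ← mul_prod_erase (range n) (fun i => i + 1) (mem_range.mpr ha)]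
  congr 1
  refine prod_nbij' (fun i => if u < i ∧ i ≤ a then i - 1 else i)
    (fun j => if u ≤ j ∧ j < a then j + 1 else j) ?_ ?_ ?_ ?_ ?_ <;>
    intro i hi <;> simp only [mem_erase, mem_range] at hi ⊢ <;> split_ifs <;> omega

theorem filter_isOneAscent_eq_piFinset (hua : u < a) :
    ({f | IsOneAscent f u a} : Finset (Fin n → Fin n)) = Fintype.piFinset fun v =>
      if v = u then {a} else if u < v ∧ v ≤ a then (Iic v).erase u else Iic v := by
  ext f
  simp only [mem_filter, mem_univ, true_and, Fintype.mem_piFinset]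
  refine ⟨fun h v => ?_, fun h => ⟨hua, by simpa using h u, fun v hv => ?_, fun w huw hwa => ?_⟩⟩
  · split_ifs with hvu hv
    · simpa [hvu] using h.apply_self
    · exact mem_erase.mpr ⟨h.apply_ne v hv.1 hv.2, mem_Iic.mpr (h.apply_le v hvu)⟩
    · exact mem_Iic.mpr (h.apply_le v hvu)
  · have := h v
    rw [if_neg hv] at this
    split_ifs at this
    · exact mem_Iic.mp (mem_of_mem_erase this)
    · exact mem_Iic.mp this
  · have := h w
    rw [if_neg huw.ne', if_pos ⟨huw, hwa⟩] at this
    exact (mem_erase.mp this).1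

theorem card_isOneAscent (hua : u < a) :
    #{f : Fin n → Fin n | IsOneAscent f u a} = n ! / (a + 1) := by
  have hcard (v : Fin n) : #(if v = u then {a} else if u < v ∧ v ≤ a then (Iic v).erase u
      else Iic v) = if (v : ℕ) = u then 1 else if (u : ℕ) < v ∧ (v : ℕ) ≤ a then (v : ℕ)
      else v + 1 := by
    simp only [Fin.val_inj, Fin.lt_def.symm, Fin.le_def.symm]
    split_ifs with hvu hv
    · rfl
    · rw [card_erase_of_mem (mem_Iic.mpr hv.1.le), Fin.card_Iic, Nat.add_sub_cancel]
    · exact Fin.card_Iic v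
  rw [filter_isOneAscent_eq_piFinset hua, Fintype.card_piFinset, prod_congr rfl fun v _ => hcard v,
    Fin.prod_univ_eq_prod_range (fun i => if i = u then 1 else if (u : ℕ) < i ∧ i ≤ a then i
      else i + 1), ← mul_prod_ascent_choices hua a.isLt, Nat.mul_div_cancel_left _ (by omega)]

theorem card_forest_one_nonrecord (hn : 1 ≤ n) :
    Nat.card {f : Fin n → Fin n // IsForestFun f ∧ Nat.card {v : Fin n // IsRec f v} = n - 1} =
      ∑ a : Fin n, a * (n ! / (a + 1)) := by
  have hunion : ({f | ∃ u a, IsOneAscent f u a} : Finset (Fin n → Fin n)) =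
      (univ : Finset (Fin n × Fin n)).biUnion fun p => {f | IsOneAscent f p.1 p.2} := by
    ext f
    simp
  have hdisj : (↑(univ : Finset (Fin n × Fin n)) : Set (Fin n × Fin n)).PairwiseDisjoint
      fun p => ({f | IsOneAscent f p.1 p.2} : Finset (Fin n → Fin n)) := by
    intro p _ q _ hpq
    refine disjoint_left.mpr fun f hp hq => hpq ?_
    obtain ⟨h1, h2⟩ := (mem_filter.mp hp).2.unique (mem_filter.mp hq).2
    exact Prod.ext h1 h2
  have hfiber (a : Fin n) : ∑ u : Fin n, #{f : Fin n → Fin n | IsOneAscent f u a} =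
      a * (n ! / (a + 1)) := by
    rw [← sum_subset (subset_univ (Iio a)) fun u _ hu => ?_, sum_congr rfl fun u hu =>
      card_isOneAscent (mem_Iio.mp hu), sum_const, Fin.card_Iio, smul_eq_mul]
    exact card_eq_zero.mpr (filter_eq_empty_iff.mpr fun f _ h => hu (mem_Iio.mpr h.lt))
  rw [Nat.card_congr (Equiv.subtypeEquivRight fun f => isForestFun_and_card_isRec_iff hn),
    Nat.card_eq_fintype_card, Fintype.card_subtype, hunion, card_biUnion hdisj,
    ← univ_product_univ, sum_product_right]
  exact sum_congr rfl fun a _ => hfiber a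

end OneAscent

section CycleMax

variable {α : Type*} [LinearOrder α] [Fintype α]

def IsCycleMax (π : Perm α) (v : α) : Prop :=
  ∀ w, π.SameCycle v w → w ≤ v

theorem IsCycleMax.of_notMem_support {π : Perm α} {v : α} (hv : v ∉ π.support) :
    IsCycleMax π v :=
  fun _ hw => (hw.eq_of_left (Perm.notMem_support.mp hv)).ge

theorem card_support_filter_isCycleMax (π : Perm α) :
    #{v ∈ π.support | IsCycleMax π v} = #π.cycleFactorsFinset := by
  refine card_bij (fun v _ => π.cycleOf v)
    (fun v hv => Perm.cycleOf_mem_cycleFactorsFinset_iff.mpr (mem_filter.mp hv).1)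
    (fun v hv w hw hvw => ?_) fun c hc => ?_
  · obtain ⟨hv, hvmax⟩ := mem_filter.mp hv
    obtain ⟨hw, hwmax⟩ := mem_filter.mp hw
    have hsame := (Perm.sameCycle_iff_cycleOf_eq_of_mem_support hv hw).mpr hvw
    exact (hwmax v hsame.symm).antisymm (hvmax w hsame)
  · have hne : c.support.Nonempty :=
      (Perm.mem_cycleFactorsFinset_iff.mp hc).1.nonempty_support
    have hmem : c.support.max' hne ∈ c.support := max'_mem _ _
    have hc_eq := Perm.cycle_is_cycleOf hmem hc
    have hsupp := Perm.mem_cycleFactorsFinset_support_le hc hmem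
    refine ⟨c.support.max' hne, mem_filter.mpr ⟨hsupp, fun w hw => c.support.le_max' w ?_⟩,
      hc_eq.symm⟩
    rw [hc_eq]
    exact Perm.mem_support_cycleOf_iff.mpr ⟨hw, hsupp⟩

theorem card_isCycleMax (π : Perm α) :
    #{v | IsCycleMax π v} = Multiset.card π.cycleType + #π.supportᶜ := by
  have hsupp : ({v | IsCycleMax π v} : Finset α).filter (· ∈ π.support) =
      {v ∈ π.support | IsCycleMax π v} := by
    ext v
    simp [and_comm]
  have hfixed : ({v | IsCycleMax π v} : Finset α).filter (· ∉ π.support) = π.supportᶜ := by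
    ext v
    simpa using IsCycleMax.of_notMem_support
  rw [← card_filter_add_card_filter_not (p := (· ∈ π.support)), hsupp, hfixed,
    card_support_filter_isCycleMax, Perm.cycleType_def, Multiset.card_map]
  rfl

theorem exists_iterate_ge (π : Perm α) (v : α) : ∃ j, 0 < j ∧ v ≤ π^[j] v :=
  ⟨orderOf π, orderOf_pos π, by rw [Perm.iterate_eq_pow, pow_orderOf_eq_one]; rfl⟩

/-- The first time the orbit of `v` under `π` returns to `{w | v ≤ w}`. -/
noncomputable def returnTime (π : Perm α) (v : α) : ℕ :=
  Nat.find (exists_iterate_ge π v)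

noncomputable def returnPoint (π : Perm α) (v : α) : α :=
  π^[returnTime π v] v

variable (π : Perm α) (v : α)

theorem returnTime_pos : 0 < returnTime π v :=
  (Nat.find_spec (exists_iterate_ge π v)).1

theorem le_returnPoint : v ≤ returnPoint π v :=
  (Nat.find_spec (exists_iterate_ge π v)).2

variable {π v}

theorem iterate_lt_of_lt_returnTime {t : ℕ} (h0 : 0 < t) (ht : t < returnTime π v) :
    π^[t] v < v :=
  lt_of_not_ge fun hle => Nat.find_min (exists_iterate_ge π v) ht ⟨h0, hle⟩

theorem isCycleMax_iff_returnPoint_eq : IsCycleMax π v ↔ returnPoint π v = v := by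
  refine ⟨fun h => (h _ (Perm.sameCycle_pow_right.mpr (Perm.SameCycle.refl _ _))).antisymm
    (le_returnPoint π v), fun h w hw => ?_⟩
  obtain ⟨i, rfl⟩ := hw.exists_nat_pow_eq
  have hper : IsPeriodicPt π (returnTime π v) v := h
  rw [← Perm.iterate_eq_pow, ← hper.iterate_mod_apply]
  rcases (Nat.zero_le (i % returnTime π v)).eq_or_lt with h0 | h0
  · rw [← h0]; rfl
  · exact (iterate_lt_of_lt_returnTime h0 (Nat.mod_lt _ (returnTime_pos π v))).le

/-- Before its return the orbit of `v` stays below `v`, where `g` is the identity. -/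
theorem returnPoint_mul {g : Perm α} (hfix : ∀ x < v, g x = x) (hge : ∀ x, v ≤ x → v ≤ g x) :
    returnPoint (g * π) v = g (returnPoint π v) := by
  have hiter : ∀ t < returnTime π v, (g * π)^[t] v = π^[t] v := by
    intro t
    induction t with
    | zero => simp
    | succ t ih =>
      intro ht
      rw [iterate_succ_apply', ih (by omega), Perm.mul_apply, ← iterate_succ_apply' π]
      exact hfix _ (iterate_lt_of_lt_returnTime (by omega) ht)
  have hlast : (g * π)^[returnTime π v] v = g (returnPoint π v) := by
    obtain ⟨t, ht⟩ := Nat.exists_eq_succ_of_ne_zero (returnTime_pos π v).ne'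
    rw [returnPoint, ht, iterate_succ_apply', hiter t (by omega), Perm.mul_apply,
      ← iterate_succ_apply' π]
  have htime : returnTime (g * π) v = returnTime π v := by
    rw [returnTime, Nat.find_eq_iff]
    refine ⟨⟨returnTime_pos π v, hlast ▸ hge _ (le_returnPoint π v)⟩, fun t ht ⟨h0, hle⟩ => ?_⟩
    rw [hiter t ht] at hle
    exact hle.not_gt (iterate_lt_of_lt_returnTime h0 ht)
  rw [returnPoint, htime, hlast]

theorem returnPoint_swap_mul {x : α} (hx : v ≤ x) :
    returnPoint (swap v x * π) v = swap v x (returnPoint π v) := by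
  refine returnPoint_mul (fun y hy => swap_apply_of_ne_of_ne hy.ne (hy.trans_le hx).ne)
    fun y hy => ?_
  rcases eq_or_ne y v with rfl | hyv
  · simpa using hx
  rcases eq_or_ne y x with rfl | hyx
  · simp
  · rwa [swap_apply_of_ne_of_ne hyv hyx]

variable (v)

theorem card_returnPoint_eq {x : α} (hx : v ≤ x) :
    #{π : Perm α | returnPoint π v = x} = #{π : Perm α | returnPoint π v = v} := by
  refine card_nbij' (swap v x * ·) (swap v x * ·) (fun π hπ => ?_) (fun π hπ => ?_)
    (fun π _ => swap_mul_self_mul v x π) (fun π _ => swap_mul_self_mul v x π)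
  all_goals
    simp only [coe_filter, mem_univ, true_and, Set.mem_ofPred_eq] at hπ ⊢
    rw [returnPoint_swap_mul hx, hπ]
  exacts [swap_apply_right v x, swap_apply_left v x]

theorem card_perms_isCycleMax_mul :
    #{π : Perm α | IsCycleMax π v} * #{w | v ≤ w} = (Fintype.card α)! :=
  calc #{π : Perm α | IsCycleMax π v} * #{w | v ≤ w}
      _ = ∑ x ∈ {w | v ≤ w}, #{π : Perm α | returnPoint π v = x} := by
        rw [sum_congr rfl fun x hx => card_returnPoint_eq v (mem_filter.mp hx).2, sum_const,
          smul_eq_mul, mul_comm]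
        simp only [isCycleMax_iff_returnPoint_eq]
      _ = #(univ : Finset (Perm α)) := (card_eq_sum_card_fiberwise fun π _ =>
        mem_filter.mpr ⟨mem_univ _, le_returnPoint π v⟩).symm
      _ = (Fintype.card α)! := by rw [card_univ, Fintype.card_perm]

end CycleMax

section Permutations

variable {n : ℕ}

theorem cyclesCount_eq_card_isCycleMax (π : Perm (Fin n)) :
    cyclesCount π = #{v | IsCycleMax π v} := by
  rw [card_isCycleMax, card_compl, Fintype.card_fin]
  rfl

theorem cyclesCount_mem_Icc (hn : 1 ≤ n) (π : Perm (Fin n)) : cyclesCount π ∈ Icc 1 n := by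
  have hmax : IsCycleMax π ⟨n - 1, by omega⟩ := fun w _ => Nat.le_sub_one_of_lt w.isLt
  rw [cyclesCount_eq_card_isCycleMax, mem_Icc]
  exact ⟨card_pos.mpr ⟨_, mem_filter.mpr ⟨mem_univ _, hmax⟩⟩,
    (card_filter_le _ _).trans (card_fin n).le⟩

theorem sum_stirC_eq_sum_cyclesCount (hn : 1 ≤ n) :
    ∑ m ∈ Icc 1 n, (n - m) * stirC n m = ∑ π : Perm (Fin n), (n - cyclesCount π) := by
  rw [← sum_fiberwise_of_maps_to fun π _ => cyclesCount_mem_Icc hn π]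
  refine sum_congr rfl fun m _ => ?_
  rw [sum_congr rfl fun π hπ => by rw [(mem_filter.mp hπ).2], sum_const, smul_eq_mul, mul_comm,
    stirC, Nat.card_eq_fintype_card, Fintype.card_subtype]

theorem card_perms_isCycleMax (v : Fin n) :
    #{π : Perm (Fin n) | IsCycleMax π v} = n ! / (n - v) := by
  have h := card_perms_isCycleMax_mul v
  rw [filter_le_eq_Ici, Fin.card_Ici, Fintype.card_fin] at h
  rw [← h, Nat.mul_div_cancel _ (by omega)]

theorem sum_sub_cyclesCount :
    ∑ π : Perm (Fin n), (n - cyclesCount π) = ∑ v : Fin n, ((n)! - (n)! / (n - v)) := by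
  have hcompl (π : Perm (Fin n)) : n - cyclesCount π = #{v | ¬ IsCycleMax π v} := by
    rw [cyclesCount_eq_card_isCycleMax, filter_not, card_sdiff_of_subset (filter_subset _ _),
      card_univ, Fintype.card_fin]
  simp_rw [hcompl, card_filter]
  rw [sum_comm]
  refine sum_congr rfl fun v _ => ?_
  rw [← card_filter, filter_not, card_sdiff_of_subset (filter_subset _ _), card_univ,
    Fintype.card_perm, Fintype.card_fin, card_perms_isCycleMax]

end Permutations

end ForestRecords

/-- The number of rooted forests on `{1,…,n}` in which exactly `n-1` of the `n`
vertices are records equals `Σ_{m=1}^n (n-m)·c(n,m)`. -/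
theorem stmt16 (n : ℕ) (hn : 1 ≤ n) :
    Nat.card {f : Fin n → Fin n // IsForestFun f ∧
        Nat.card {v : Fin n // IsRec f v} = n - 1} =
      ∑ m ∈ Finset.Icc 1 n, (n - m) * stirC n m := by
  rw [ForestRecords.card_forest_one_nonrecord hn,
    ForestRecords.sum_stirC_eq_sum_cyclesCount hn, ForestRecords.sum_sub_cyclesCount]
  refine Fintype.sum_equiv Fin.revPerm _ _ fun a => ?_
  rw [Fin.revPerm_apply, Fin.val_rev, Nat.sub_sub_self (by omega),
    ForestRecords.sub_div_eq_mul_div (Nat.dvd_factorial a.succ_pos a.isLt)]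
end

section
/- The number of rooted trees on vertex set {0,1,...,n} rooted at 0 with no doubly record-covering pair equals 2(n+1)^(n-2), for n ≥ 2. -/
/-- A record of a tree on `{0,1,…,n}` rooted at `0`: a nonzero vertex whose label
is maximal on its path to the root. -/
def IsRec0 {n : ℕ} (f : Fin (n + 1) → Fin (n + 1)) (v : Fin (n + 1)) : Prop :=
  v ≠ 0 ∧ ∀ k, f^[k] v ≤ v

/-- `R` doubly record-covers `R'`: both are records, `R'` is a descendant of `R`,
and `R'` is the smallest record exceeding `R`. -/
def DRC {n : ℕ} (f : Fin (n + 1) → Fin (n + 1)) (R R' : Fin (n + 1)) : Prop :=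
  IsRec0 f R ∧ IsRec0 f R' ∧ (∃ k, f^[k] R' = R) ∧ R < R' ∧
    ∀ R'', IsRec0 f R'' → R < R'' → R' ≤ R''

open Finset
open scoped Classical


lemma binom1 (x : ℤ) (m : ℕ) :
    ∑ j ∈ range (m + 1), (m.choose j : ℤ) * x ^ (m - j) = (x + 1) ^ m := by
  rw [add_pow, ← Finset.sum_range_reflect]
  refine Finset.sum_congr rfl fun j hj => ?_
  have hj' : j ≤ m := by simpa [Nat.lt_succ_iff] using hj
  have h1 : m + 1 - 1 - j = m - j := by omega
  have h2 : m - (m - j) = j := by omega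
  rw [h1, h2, Nat.choose_symm hj']
  ring

lemma binom2 (x : ℤ) (m : ℕ) :
    ∑ j ∈ range (m + 1), (j : ℤ) * (m.choose j : ℤ) * x ^ (m - j) = m * (x + 1) ^ (m - 1) := by
  rcases Nat.eq_zero_or_pos m with hm | hm
  · subst hm; simp
  rw [Finset.sum_range_succ']
  have key : ∀ i ∈ range m, ((i:ℤ)+1) * ((m.choose (i+1) : ℤ)) * x ^ (m - (i+1))
      = (m : ℤ) * ((m-1).choose i : ℤ) * x ^ ((m-1) - i) := by
    intro i hi
    have h1 : (m - 1).succ = m := by omega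
    have h2 : (m-1).succ * (m-1).choose i = (m-1).succ.choose i.succ * i.succ :=
      Nat.add_one_mul_choose_eq (m-1) i
    rw [h1] at h2
    have h3 : m - (i+1) = (m-1) - i := by omega
    rw [h3]
    have h2' : ((m:ℤ)) * ((m-1).choose i : ℤ) = (m.choose (i+1) : ℤ) * ((i:ℤ)+1) := by
      exact_mod_cast h2
    rw [h2']
    ring
  calc ∑ i ∈ range m, ((i:ℤ)+1) * (m.choose (i+1) : ℤ) * x ^ (m - (i+1)) + (0:ℤ) * (m.choose 0 : ℤ) * x ^ (m - 0)
      = ∑ i ∈ range m, (m : ℤ) * ((m-1).choose i : ℤ) * x ^ ((m-1) - i) := by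
        rw [Finset.sum_congr rfl key]; ring
    _ = (m : ℤ) * ∑ i ∈ range ((m-1)+1), ((m-1).choose i : ℤ) * x ^ ((m-1) - i) := by
        rw [Finset.mul_sum]
        have : (m-1)+1 = m := by omega
        rw [this]
        exact Finset.sum_congr rfl fun i _ => by ring
    _ = (m : ℤ) * (x + 1) ^ (m - 1) := by rw [binom1]

lemma keyId (k m : ℕ) (hk : 1 ≤ k) (hm : 1 ≤ m) :
    ∑ j ∈ range (m + 1), m.choose j *
      (if j = m then 1 else (k - 1 + j) * (k + m - 1) ^ (m - 1 - j)) = k * (k + m) ^ (m - 1) := by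
  have hcast : ∀ j, ((k - 1 + j : ℕ) : ℤ) = (k : ℤ) - 1 + j := by
    intro j; push_cast [Nat.cast_sub hk]; ring
  have hx : ((k + m - 1 : ℕ) : ℤ) = (k : ℤ) + m - 1 := by
    have : (1:ℕ) ≤ k + m := by omega
    push_cast [Nat.cast_sub this]; ring
  set x : ℤ := (k : ℤ) + m - 1 with hxdef
  have hxne : x ≠ 0 := by
    have : (1:ℤ) ≤ x := by simp [hxdef]; push_cast; omega
    omega
  have main : ∑ j ∈ range (m + 1), (m.choose j : ℤ) *
      (if j = m then 1 else ((k:ℤ) - 1 + j) * x ^ (m - 1 - j)) = (k:ℤ) * (x + 1) ^ (m - 1) := by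
    apply mul_left_cancel₀ hxne
    rw [Finset.mul_sum, Finset.sum_range_succ]
    have hlast : x * ((m.choose m : ℤ) * (if m = m then 1 else ((k:ℤ)-1+m) * x ^ (m-1-m))) = x := by
      simp
    rw [hlast]
    have hterm : ∀ j ∈ range m, x * ((m.choose j : ℤ) *
        (if j = m then 1 else ((k:ℤ) - 1 + j) * x ^ (m - 1 - j)))
        = (m.choose j : ℤ) * (((k:ℤ) - 1 + j) * x ^ (m - j)) := by
      intro j hj
      have hjm : j < m := Finset.mem_range.mp hj
      rw [if_neg (by omega)]
      have : x ^ (m - j) = x * x ^ (m - 1 - j) := by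
        rw [← pow_succ']
        congr 1
        omega
      rw [this]; ring
    rw [Finset.sum_congr rfl hterm]
    have hfull : ∑ j ∈ range (m+1), (m.choose j : ℤ) * (((k:ℤ) - 1 + j) * x ^ (m - j))
        = ((k:ℤ) - 1) * (x+1) ^ m + (m:ℤ) * (x+1) ^ (m-1) := by
      have expand : ∀ j ∈ range (m+1), (m.choose j : ℤ) * (((k:ℤ) - 1 + j) * x ^ (m - j))
          = ((k:ℤ)-1) * ((m.choose j : ℤ) * x ^ (m-j)) + (j:ℤ) * (m.choose j:ℤ) * x ^ (m-j) := by
        intro j _; ring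
      rw [Finset.sum_congr rfl expand, Finset.sum_add_distrib, ← Finset.mul_sum, binom1, binom2]
    have hsplit : ∑ j ∈ range m, (m.choose j : ℤ) * (((k:ℤ) - 1 + j) * x ^ (m - j))
        = ((k:ℤ) - 1) * (x+1) ^ m + (m:ℤ) * (x+1) ^ (m-1) - x := by
      have := hfull
      rw [Finset.sum_range_succ] at this
      have hlast2 : (m.choose m : ℤ) * (((k:ℤ) - 1 + m) * x ^ (m - m)) = x := by
        simp [hxdef]; ring
      rw [hlast2] at this
      linarith
    rw [hsplit]
    have hpow : (x+1) ^ m = (x+1) ^ (m-1) * (x+1) := by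
      rw [← pow_succ]; congr 1; omega
    rw [hpow]; ring
  have hmain2 : ((∑ j ∈ range (m + 1), m.choose j *
      (if j = m then 1 else (k - 1 + j) * (k + m - 1) ^ (m - 1 - j)) : ℕ) : ℤ)
      = (k:ℤ) * (x + 1) ^ (m - 1) := by
    rw [Nat.cast_sum, ← main]
    refine Finset.sum_congr rfl fun j _ => ?_
    rw [Nat.cast_mul]
    congr 1
    split_ifs with h
    · simp
    · rw [Nat.cast_mul, hcast j, Nat.cast_pow, hx]
  have hfin : ((k * (k + m) ^ (m - 1) : ℕ) : ℤ) = (k:ℤ) * (x + 1) ^ (m - 1) := by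
    push_cast [hxdef]; ring
  exact Nat.cast_injective (hmain2.trans hfin.symm)


universe u

section Forest
variable {α : Type u} [Fintype α] [DecidableEq α]

def Conv (R : Finset α) (f : α → α) : Prop :=
  (∀ r ∈ R, f r = r) ∧ ∀ v, ∃ k, f^[k] v ∈ R

def RootFiber (R : Finset α) (r : α) (f : α → α) : Finset α :=
  (univ \ R).filter (fun v => f v = r)

def RSet (R : Finset α) (r : α) (S : Finset α) : Finset {v : α // v ≠ r} :=
  (R.erase r ∪ S).subtype (· ≠ r)

def fwdMap (r : α) (f : α → α) : {v : α // v ≠ r} → {v : α // v ≠ r} :=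
  fun v => if h : f ↑v = r then v else ⟨f ↑v, h⟩

def bwdMap (r : α) (S : Finset α) (g : {v : α // v ≠ r} → {v : α // v ≠ r}) : α → α :=
  fun v => if v ∈ S then r else if h : v = r then r else ↑(g ⟨v, h⟩)

lemma mem_RSet {R : Finset α} {r : α} {S : Finset α} (v : {v : α // v ≠ r}) :
    v ∈ RSet R r S ↔ (↑v ∈ R.erase r ∨ ↑v ∈ S) := by
  simp [RSet, Finset.mem_subtype, Finset.mem_union]

lemma fiber_card (R : Finset α) (r : α) (hr : r ∈ R) (S : Finset α)
    (hS : S ⊆ univ \ R) :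
    (univ.filter fun f : α → α => Conv R f ∧ RootFiber R r f = S).card
      = (univ.filter fun g : {v : α // v ≠ r} → {v : α // v ≠ r} => Conv (RSet R r S) g).card := by
  classical
  have hSR : ∀ v ∈ S, v ∉ R := fun v hv => (Finset.mem_sdiff.mp (hS hv)).2
  have hrS : r ∉ S := fun h => hSR r h hr
  refine Finset.card_bij' (fun f _ => fwdMap r f) (fun g _ => bwdMap r S g) ?_ ?_ ?_ ?_
  · -- forward membership
    intro f hf
    rw [Finset.mem_filter] at hf ⊢
    obtain ⟨-, hconv, hfib⟩ := hf
    refine ⟨Finset.mem_univ _, ?_, ?_⟩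
    · -- roots fixed
      intro v hv
      rw [mem_RSet] at hv
      rcases hv with hv | hv
      · have hvR : (v : α) ∈ R := Finset.mem_of_mem_erase hv
        have hvr : (v : α) ≠ r := (Finset.mem_erase.mp hv).1
        have : f ↑v = ↑v := hconv.1 _ hvR
        simp only [fwdMap]
        rw [dif_neg (by rw [this]; exact hvr)]
        exact Subtype.ext this
      · have : f ↑v = r := by
          rw [← hfib] at hv
          exact (Finset.mem_filter.mp hv).2
        simp only [fwdMap]
        rw [dif_pos this]
    · -- convergence
      have aux : ∀ k (v : {v : α // v ≠ r}), f^[k] ↑v ∈ R →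
          ∃ j, (fwdMap r f)^[j] v ∈ RSet R r S := by
        intro k
        induction k with
        | zero =>
          intro v hv
          exact ⟨0, by rw [mem_RSet]; exact Or.inl (Finset.mem_erase.mpr ⟨v.2, hv⟩)⟩
        | succ k ih =>
          intro v hv
          by_cases h0 : (v : α) ∈ R
          · exact ⟨0, by rw [mem_RSet]; exact Or.inl (Finset.mem_erase.mpr ⟨v.2, h0⟩)⟩
          by_cases h1 : f ↑v = r
          · exact ⟨0, by
              rw [mem_RSet]
              exact Or.inr (by
                rw [← hfib]
                exact Finset.mem_filter.mpr ⟨Finset.mem_sdiff.mpr ⟨Finset.mem_univ _, h0⟩, h1⟩)⟩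
          · have hF : fwdMap r f v = ⟨f ↑v, h1⟩ := dif_neg h1
            have : f^[k] (f ↑v) ∈ R := by
              rw [← Function.iterate_succ_apply]; exact hv
            obtain ⟨j, hj⟩ := ih ⟨f ↑v, h1⟩ this
            exact ⟨j + 1, by rw [Function.iterate_succ_apply, hF]; exact hj⟩
      intro v
      obtain ⟨k, hk⟩ := hconv.2 ↑v
      exact aux k v hk
  · -- backward membership
    intro g hg
    rw [Finset.mem_filter] at hg ⊢
    obtain ⟨-, hgroot, hgconv⟩ := hg
    have hGroot : ∀ v ∈ R, bwdMap r S g v = v := by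
      intro v hv
      by_cases hvS : v ∈ S
      · exact absurd hv (hSR v hvS)
      by_cases hvr : v = r
      · simp [bwdMap, hvS, hvr]
      · have : (⟨v, hvr⟩ : {v : α // v ≠ r}) ∈ RSet R r S := by
          rw [mem_RSet]; exact Or.inl (Finset.mem_erase.mpr ⟨hvr, hv⟩)
        have := hgroot _ this
        simp only [bwdMap, if_neg hvS, dif_neg hvr]
        rw [this]
    have aux2 : ∀ k (v : {v : α // v ≠ r}), g^[k] v ∈ RSet R r S →
        ∃ j, (bwdMap r S g)^[j] ↑v ∈ R := by
      intro k
      induction k with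
      | zero =>
        intro v hv
        rw [Function.iterate_zero_apply] at hv
        rw [mem_RSet] at hv
        rcases hv with hv | hv
        · exact ⟨0, Finset.mem_of_mem_erase hv⟩
        · refine ⟨1, ?_⟩
          rw [Function.iterate_one]
          simp [bwdMap, hv, hr]
      | succ k ih =>
        intro v hv
        by_cases hvS : (v : α) ∈ S
        · refine ⟨1, ?_⟩
          rw [Function.iterate_one]
          simp [bwdMap, hvS, hr]
        by_cases hvR : (v : α) ∈ R
        · exact ⟨0, hvR⟩
        · have hG : bwdMap r S g ↑v = ↑(g v) := by
            simp only [bwdMap, if_neg hvS, dif_neg v.2]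
          have : g^[k] (g v) ∈ RSet R r S := by
            rw [← Function.iterate_succ_apply]; exact hv
          obtain ⟨j, hj⟩ := ih (g v) this
          exact ⟨j + 1, by rw [Function.iterate_succ_apply, hG]; exact hj⟩
    refine ⟨Finset.mem_univ _, ⟨hGroot, ?_⟩, ?_⟩
    · -- convergence
      intro v
      by_cases hvS : v ∈ S
      · exact ⟨1, by rw [Function.iterate_one]; simp [bwdMap, hvS, hr]⟩
      by_cases hvr : v = r
      · exact ⟨0, by rw [Function.iterate_zero_apply, hvr]; exact hr⟩
      · obtain ⟨k, hk⟩ := hgconv ⟨v, hvr⟩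
        exact aux2 k ⟨v, hvr⟩ hk
    · -- fiber condition
      ext v
      simp only [RootFiber, Finset.mem_filter, Finset.mem_sdiff, Finset.mem_univ, true_and]
      constructor
      · rintro ⟨hvR, hvr'⟩
        by_contra hvS
        have hvr : v ≠ r := fun h => hvR (h ▸ hr)
        have : bwdMap r S g v = ↑(g ⟨v, hvr⟩) := by
          simp only [bwdMap, if_neg hvS, dif_neg hvr]
        rw [this] at hvr'
        exact (g ⟨v, hvr⟩).2 hvr'
      · intro hvS
        exact ⟨hSR v hvS, by simp only [bwdMap, if_pos hvS]⟩
  · -- left inverse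
    intro f hf
    rw [Finset.mem_filter] at hf
    obtain ⟨-, hconv, hfib⟩ := hf
    funext v
    by_cases hvS : v ∈ S
    · have : f v = r := by
        rw [← hfib] at hvS
        exact (Finset.mem_filter.mp hvS).2
      simp only [bwdMap, if_pos hvS]
      rw [this]
    by_cases hvr : v = r
    · subst hvr
      simp only [bwdMap, if_neg hvS, dif_pos rfl]
      exact (hconv.1 _ hr).symm
    · simp only [bwdMap, if_neg hvS, dif_neg hvr]
      have hfv : f v ≠ r := by
        intro h
        apply hvS
        rw [← hfib]
        refine Finset.mem_filter.mpr ⟨Finset.mem_sdiff.mpr ⟨Finset.mem_univ _, ?_⟩, h⟩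
        intro hvR
        exact hvr ((hconv.1 _ hvR).symm.trans h)
      simp only [fwdMap, dif_neg hfv]
  · -- right inverse
    intro g hg
    rw [Finset.mem_filter] at hg
    obtain ⟨-, hgroot, -⟩ := hg
    funext v
    by_cases hvS : (v : α) ∈ S
    · have h1 : bwdMap r S g ↑v = r := by simp only [bwdMap, if_pos hvS]
      have h2 : g v = v := hgroot v (by rw [mem_RSet]; exact Or.inr hvS)
      show (if h : bwdMap r S g ↑v = r then v
        else (⟨bwdMap r S g ↑v, h⟩ : {v : α // v ≠ r})) = g v
      rw [dif_pos h1, h2]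
    · have h1 : bwdMap r S g ↑v = ↑(g v) := by
        simp only [bwdMap, if_neg hvS, dif_neg v.2]
      show (if h : bwdMap r S g ↑v = r then v
        else (⟨bwdMap r S g ↑v, h⟩ : {v : α // v ≠ r})) = g v
      rw [dif_neg (show ¬ bwdMap r S g ↑v = r by rw [h1]; exact (g v).2)]
      exact Subtype.ext h1

theorem conv_count : ∀ (N : ℕ) (α : Type u) [Fintype α] [DecidableEq α] (R : Finset α),
    Fintype.card α = N →
    Nat.card {f : α → α // Conv R f}
      = if R = Finset.univ then 1 else R.card * N ^ (N - R.card - 1) := by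
  intro N
  induction N using Nat.strong_induction_on with
  | _ N IH =>
    intro α _ _ R hcard
    classical
    by_cases hRu : R = Finset.univ
    · rw [if_pos hRu]
      haveI : Unique {f : α → α // Conv R f} := {
        default := ⟨id, fun r _ => rfl, fun v => ⟨0, by rw [hRu]; exact Finset.mem_univ _⟩⟩
        uniq := by
          rintro ⟨f, hroot, -⟩
          apply Subtype.ext
          funext v
          exact hroot v (by rw [hRu]; exact Finset.mem_univ v) }
      exact Nat.card_unique
    rw [if_neg hRu]
    have hRcard : R.card < N := by
      rw [← hcard, ← Finset.card_univ]
      exact Finset.card_lt_card (Finset.ssubset_univ_iff.mpr hRu)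
    by_cases hR0 : R = ∅
    · subst hR0
      have hα : Nonempty α := by
        rw [← Fintype.card_pos_iff]; omega
      obtain ⟨x⟩ := hα
      haveI : IsEmpty {f : α → α // Conv (∅ : Finset α) f} := by
        constructor
        rintro ⟨f, -, hconv⟩
        obtain ⟨k, hk⟩ := hconv x
        exact absurd hk (Finset.notMem_empty _)
      simp [Nat.card_of_isEmpty]
    obtain ⟨r, hr⟩ := Finset.nonempty_iff_ne_empty.mpr hR0
    set kk := R.card with hkk
    have hk1 : 1 ≤ kk := Finset.card_pos.mpr ⟨r, hr⟩
    set m := N - kk with hm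
    have hm1 : 1 ≤ m := by omega
    rw [Nat.card_eq_fintype_card, Fintype.card_subtype]
    have hmap : ∀ f ∈ univ.filter (fun f : α → α => Conv R f),
        RootFiber R r f ∈ (univ \ R).powerset := by
      intro f _
      exact Finset.mem_powerset.mpr (Finset.filter_subset _ _)
    rw [Finset.card_eq_sum_card_fiberwise hmap]
    have hβcard : Fintype.card {v : α // v ≠ r} = N - 1 := by
      have h1 : Fintype.card {v : α // ¬ (v = r)}
          = Fintype.card α - Fintype.card {v : α // v = r} :=
        Fintype.card_subtype_compl _
      rw [Fintype.card_subtype_eq, hcard] at h1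
      exact h1
    have hsd : (univ \ R).card = m := by
      rw [Finset.card_sdiff_of_subset (Finset.subset_univ R), Finset.card_univ, hcard]
    have hfib : ∀ S ∈ (univ \ R).powerset,
        (Finset.filter (fun f => RootFiber R r f = S)
          (univ.filter (fun f : α → α => Conv R f))).card
          = if S.card = m then 1 else (kk - 1 + S.card) * (N - 1) ^ (m - 1 - S.card) := by
      intro S hSp
      have hS : S ⊆ univ \ R := Finset.mem_powerset.mp hSp
      rw [Finset.filter_filter]
      rw [fiber_card R r hr S hS]
      have hRS_card : (RSet R r S).card = kk - 1 + S.card := by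
        rw [RSet, Finset.card_subtype]
        rw [Finset.filter_true_of_mem ?hh]
        case hh =>
          intro v hv
          rcases Finset.mem_union.mp hv with hv | hv
          · exact (Finset.mem_erase.mp hv).1
          · exact fun h => (Finset.mem_sdiff.mp (hS hv)).2 (h ▸ hr)
        rw [Finset.card_union_of_disjoint, Finset.card_erase_of_mem hr]
        exact Finset.disjoint_left.mpr
          (fun v hv hvS => (Finset.mem_sdiff.mp (hS hvS)).2 (Finset.mem_of_mem_erase hv))
      have hcards : (univ.filter (fun g : {v : α // v ≠ r} → {v : α // v ≠ r}
          => Conv (RSet R r S) g)).card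
          = Nat.card {g : {v : α // v ≠ r} → {v : α // v ≠ r} // Conv (RSet R r S) g} := by
        rw [Nat.card_eq_fintype_card, Fintype.card_subtype]
      rw [hcards, IH (N - 1) (by omega) {v : α // v ≠ r} (RSet R r S) hβcard]
      have hcrit : (RSet R r S = Finset.univ) ↔ S.card = m := by
        constructor
        · intro h
          have h2 := congrArg Finset.card h
          rw [hRS_card, Finset.card_univ, hβcard] at h2
          omega
        · intro h
          apply Finset.eq_univ_of_card
          rw [hRS_card, hβcard]; omega
      by_cases hcase : S.card = m
      · rw [if_pos (hcrit.mpr hcase), if_pos hcase]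
      · rw [if_neg (fun h => hcase (hcrit.mp h)), if_neg hcase, hRS_card]
        have hexp : N - 1 - (kk - 1 + S.card) - 1 = m - 1 - S.card := by omega
        rw [hexp]
    rw [Finset.sum_congr rfl hfib, Finset.sum_powerset, hsd]
    have hinner : ∀ j ∈ Finset.range (m + 1),
        (∑ S ∈ Finset.powersetCard j (univ \ R),
          (if S.card = m then 1 else (kk - 1 + S.card) * (N - 1) ^ (m - 1 - S.card)))
        = m.choose j * (if j = m then 1 else (kk - 1 + j) * (kk + m - 1) ^ (m - 1 - j)) := by
      intro j hj
      have hterm : ∀ S ∈ Finset.powersetCard j (univ \ R),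
          (if S.card = m then 1 else (kk - 1 + S.card) * (N - 1) ^ (m - 1 - S.card))
          = (if j = m then 1 else (kk - 1 + j) * (kk + m - 1) ^ (m - 1 - j)) := by
        intro S hSp
        have hSc : S.card = j := (Finset.mem_powersetCard.mp hSp).2
        have hN1 : N - 1 = kk + m - 1 := by omega
        rw [hSc, hN1]
      rw [Finset.sum_congr rfl hterm, Finset.sum_const, Finset.card_powersetCard, hsd,
        smul_eq_mul]
    rw [Finset.sum_congr rfl hinner, keyId kk m hk1 hm1]
    have h1 : kk + m = N := by omega
    have h2 : m - 1 = N - kk - 1 := by omega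
    rw [h1, h2]

namespace Rec17

variable {n : ℕ}

noncomputable def pathMax (f : Fin (n+1) → Fin (n+1)) (v : Fin (n+1)) : Fin (n+1) :=
  (Set.toFinite (Set.range fun k => f^[k] v)).toFinset.max'
    ⟨v, by rw [Set.Finite.mem_toFinset]; exact ⟨0, rfl⟩⟩

lemma iterate_le_pathMax (f : Fin (n+1) → Fin (n+1)) (v : Fin (n+1)) (k : ℕ) :
    f^[k] v ≤ pathMax f v :=
  Finset.le_max' _ _ (by rw [Set.Finite.mem_toFinset]; exact ⟨k, rfl⟩)

lemma le_pathMax (f : Fin (n+1) → Fin (n+1)) (v : Fin (n+1)) : v ≤ pathMax f v :=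
  iterate_le_pathMax f v 0

lemma pathMax_mem (f : Fin (n+1) → Fin (n+1)) (v : Fin (n+1)) :
    ∃ k, f^[k] v = pathMax f v := by
  have := Finset.max'_mem (Set.toFinite (Set.range fun k => f^[k] v)).toFinset
    ⟨v, by rw [Set.Finite.mem_toFinset]; exact ⟨0, rfl⟩⟩
  rwa [Set.Finite.mem_toFinset] at this

lemma pathMax_rec (f : Fin (n+1) → Fin (n+1)) (v : Fin (n+1)) :
    pathMax f v = max v (pathMax f (f v)) := by
  apply le_antisymm
  · obtain ⟨k, hk⟩ := pathMax_mem f v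
    rcases k with _ | k
    · exact hk ▸ le_max_left _ _
    · rw [Function.iterate_succ_apply] at hk
      exact le_trans (hk ▸ iterate_le_pathMax f (f v) k) (le_max_right _ _)
  · refine max_le (le_pathMax f v) ?_
    obtain ⟨k, hk⟩ := pathMax_mem f (f v)
    rw [← hk, ← Function.iterate_succ_apply]
    exact iterate_le_pathMax f v (k+1)

lemma pathMax_zero (f : Fin (n+1) → Fin (n+1)) (h : f 0 = 0) : pathMax f 0 = 0 := by
  obtain ⟨k, hk⟩ := pathMax_mem f 0
  rw [← hk, Function.iterate_fixed h]

lemma isRec_iff (f : Fin (n+1) → Fin (n+1)) (v : Fin (n+1)) :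
    IsRec0 f v ↔ v ≠ 0 ∧ pathMax f v = v := by
  constructor
  · rintro ⟨h0, h⟩
    refine ⟨h0, le_antisymm ?_ (le_pathMax f v)⟩
    obtain ⟨k, hk⟩ := pathMax_mem f v
    exact hk ▸ h k
  · rintro ⟨h0, h⟩
    refine ⟨h0, fun k => ?_⟩
    have := iterate_le_pathMax f v k
    rwa [h] at this

lemma pathMax_isRec (f : Fin (n+1) → Fin (n+1)) (v : Fin (n+1)) (hv : v ≠ 0) :
    IsRec0 f (pathMax f v) := by
  constructor
  · have : (0 : Fin (n+1)) < v := Fin.pos_iff_ne_zero.mpr hv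
    exact Fin.pos_iff_ne_zero.mp (lt_of_lt_of_le this (le_pathMax f v))
  · intro j
    obtain ⟨k, hk⟩ := pathMax_mem f v
    rw [← hk, ← Function.iterate_add_apply]
    exact hk ▸ iterate_le_pathMax f v (j + k)

lemma iterate_zero_stable (f : Fin (n+1) → Fin (n+1)) (hf0 : f 0 = 0) (v : Fin (n+1))
    (j : ℕ) (hj : f^[j] v = 0) (i : ℕ) : f^[j + i] v = 0 := by
  induction i with
  | zero => exact hj
  | succ i ih =>
    have : j + (i + 1) = (j + i) + 1 := by omega
    rw [this, Function.iterate_succ_apply', ih, hf0]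

lemma no_cycle (f : Fin (n+1) → Fin (n+1)) (hf0 : f 0 = 0)
    (hconv : ∀ v, ∃ k, f^[k] v = 0) (v : Fin (n+1)) (hv : v ≠ 0) (k : ℕ) (hk : 0 < k) :
    f^[k] v ≠ v := by
  intro h
  have hmul : ∀ m, f^[m * k] v = v := by
    intro m
    induction m with
    | zero => simp
    | succ m ih =>
      have : (m + 1) * k = m * k + k := by ring
      rw [this, Function.iterate_add_apply, h, ih]
  obtain ⟨j, hj⟩ := hconv v
  have h1 : j + 1 ≤ (j + 1) * k := Nat.le_mul_of_pos_right (j+1) hk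
  have h2 : (j + 1) * k = j + ((j + 1) * k - j) := by omega
  have h3 : f^[(j+1) * k] v = 0 := by
    rw [h2]; exact iterate_zero_stable f hf0 v j hj _
  rw [hmul (j+1)] at h3
  exact hv h3

lemma pathMax_f_lt (f : Fin (n+1) → Fin (n+1)) (hf0 : f 0 = 0)
    (hconv : ∀ v, ∃ k, f^[k] v = 0) (r : Fin (n+1)) (hr : IsRec0 f r) :
    pathMax f (f r) < r := by
  have hMr : pathMax f r = r := ((isRec_iff f r).mp hr).2
  have h1 : pathMax f (f r) ≤ r := by
    obtain ⟨k, hk⟩ := pathMax_mem f (f r)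
    have := iterate_le_pathMax f r (k+1)
    rw [hMr] at this
    rw [← hk, ← Function.iterate_succ_apply]
    exact this
  refine lt_of_le_of_ne h1 ?_
  intro heq
  obtain ⟨k, hk⟩ := pathMax_mem f (f r)
  rw [heq, ← Function.iterate_succ_apply] at hk
  exact no_cycle f hf0 hconv r hr.1 (k+1) (Nat.succ_pos k) hk

noncomputable def recSet (f : Fin (n+1) → Fin (n+1)) : Finset (Fin (n+1)) :=
  univ.filter (IsRec0 f)

lemma mem_recSet {f : Fin (n+1) → Fin (n+1)} {v : Fin (n+1)} :
    v ∈ recSet f ↔ IsRec0 f v := by simp [recSet]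

lemma last_ne_zero (hn : n ≠ 0) : (Fin.last n : Fin (n+1)) ≠ 0 := by
  simp [Fin.ext_iff, Fin.last]
  omega

lemma last_mem_recSet (f : Fin (n+1) → Fin (n+1)) (hn : n ≠ 0) :
    Fin.last n ∈ recSet f :=
  mem_recSet.mpr ⟨last_ne_zero hn, fun _ => Fin.le_last _⟩

/-- The key surgery lemma: modifying a tree only at its records, sending each record
either to `0` or to a vertex whose path-max is smaller, preserves treeness and
all path-maxima. -/
lemma surgery (f g : Fin (n+1) → Fin (n+1)) (hf0 : f 0 = 0)
    (hconv : ∀ v, ∃ k, f^[k] v = 0)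
    (hng : ∀ v, ¬ IsRec0 f v → g v = f v)
    (hrg : ∀ r, IsRec0 f r → g r = 0 ∨ pathMax f (g r) < r) :
    (∀ v, ∃ k, g^[k] v = 0) ∧ (∀ v, pathMax g v = pathMax f v) := by
  have hg0 : g 0 = 0 := by
    rw [hng 0 (fun h => h.1 rfl), hf0]
  have main : ∀ a : ℕ, ∀ v, (pathMax f v : ℕ) = a →
      ((∃ k, g^[k] v = 0) ∧ pathMax g v = pathMax f v) := by
    intro a
    induction a using Nat.strong_induction_on with
    | _ a IHa =>
    have hzero : ((∃ k, g^[k] (0 : Fin (n+1)) = 0) ∧ pathMax g 0 = pathMax f 0) := by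
      refine ⟨⟨0, rfl⟩, ?_⟩
      rw [pathMax_zero g hg0, pathMax_zero f hf0]
    have hreccase : ∀ v, IsRec0 f v → (pathMax f v : ℕ) = a →
        ((∃ k, g^[k] v = 0) ∧ pathMax g v = pathMax f v) := by
      intro v hrec ha
      have hMv : pathMax f v = v := ((isRec_iff f v).mp hrec).2
      rcases hrg v hrec with h0 | hlt
      · refine ⟨⟨1, by rw [Function.iterate_one, h0]⟩, ?_⟩
        rw [pathMax_rec g v, h0, pathMax_zero g hg0, hMv]
        exact max_eq_left (Fin.zero_le _)
      · have hlt' : (pathMax f (g v) : ℕ) < a := by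
          rw [← ha, hMv]
          exact hlt
        obtain ⟨⟨j, hj⟩, hMg⟩ := IHa _ hlt' (g v) rfl
        refine ⟨⟨j + 1, by rw [Function.iterate_succ_apply, hj]⟩, ?_⟩
        rw [pathMax_rec g v, hMg, hMv]
        exact max_eq_left (le_of_lt hlt)
    have inner : ∀ k v, f^[k] v = pathMax f v → (pathMax f v : ℕ) = a →
        ((∃ k, g^[k] v = 0) ∧ pathMax g v = pathMax f v) := by
      intro k
      induction k with
      | zero =>
        intro v hk ha
        by_cases hv0 : v = 0
        · exact hv0 ▸ hzero
        · exact hreccase v ((isRec_iff f v).mpr ⟨hv0, hk.symm⟩) ha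
      | succ k ihk =>
        intro v hk ha
        by_cases hv0 : v = 0
        · exact hv0 ▸ hzero
        by_cases hrec : IsRec0 f v
        · exact hreccase v hrec ha
        · have hgv : g v = f v := hng v hrec
          have hne : pathMax f v ≠ v := fun h => hrec ((isRec_iff f v).mpr ⟨hv0, h⟩)
          have hfv : pathMax f (f v) = pathMax f v := by
            have h1 : pathMax f v = max v (pathMax f (f v)) := pathMax_rec f v
            rcases le_total (pathMax f (f v)) v with h | h
            · exact absurd (h1.trans (max_eq_left h)) hne
            · rw [h1, max_eq_right h]
          have hk' : f^[k] (f v) = pathMax f (f v) := by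
            rw [hfv, ← Function.iterate_succ_apply]; exact hk
          obtain ⟨⟨j, hj⟩, hMg⟩ := ihk (f v) hk' (by rw [hfv]; exact ha)
          refine ⟨⟨j + 1, by rw [Function.iterate_succ_apply, hgv, hj]⟩, ?_⟩
          rw [pathMax_rec g v, hgv, hMg, hfv]
          exact max_eq_right (le_pathMax f v)
    intro v ha
    obtain ⟨k, hk⟩ := pathMax_mem f v
    exact inner k v hk ha
  exact ⟨fun v => (main (pathMax f v) v rfl).1, fun v => (main (pathMax f v) v rfl).2⟩

noncomputable def nextS (s : Finset (Fin (n+1))) (r : Fin (n+1)) : Fin (n+1) :=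
  if h : (s.filter (fun x => r < x)).Nonempty then (s.filter (fun x => r < x)).min' h else 0

noncomputable def prevS (s : Finset (Fin (n+1))) (r : Fin (n+1)) : Fin (n+1) :=
  if h : (s.filter (fun x => x < r)).Nonempty then (s.filter (fun x => x < r)).max' h else 0

noncomputable def minS (s : Finset (Fin (n+1))) : Fin (n+1) :=
  if h : s.Nonempty then s.min' h else 0

noncomputable def Phi (f : Fin (n+1) → Fin (n+1)) : Fin (n+1) → Fin (n+1) :=
  fun v => if IsRec0 f v then (if v = Fin.last n then 0 else f (nextS (recSet f) v)) else f v

noncomputable def Psi (g : Fin (n+1) → Fin (n+1)) : Fin (n+1) → Fin (n+1) :=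
  fun v => if IsRec0 g v then (if v = minS (recSet g) then 0 else g (prevS (recSet g) v)) else g v

set_option maxHeartbeats 1000000 in
lemma nextS_spec (s : Finset (Fin (n+1))) (r : Fin (n+1))
    (hne : (s.filter (fun x => r < x)).Nonempty) :
    nextS s r ∈ s ∧ r < nextS s r ∧ ∀ w ∈ s, r < w → nextS s r ≤ w := by
  have heq : nextS s r = (s.filter (fun x => r < x)).min' hne := dif_pos hne
  rw [heq]
  have hmem := Finset.min'_mem _ hne
  rw [Finset.mem_filter] at hmem
  exact ⟨hmem.1, hmem.2, fun w hw hrw =>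
    Finset.min'_le _ w (Finset.mem_filter.mpr ⟨hw, hrw⟩)⟩

set_option maxHeartbeats 1000000 in
lemma prevS_spec (s : Finset (Fin (n+1))) (r : Fin (n+1))
    (hne : (s.filter (fun x => x < r)).Nonempty) :
    prevS s r ∈ s ∧ prevS s r < r ∧ ∀ w ∈ s, w < r → w ≤ prevS s r := by
  have heq : prevS s r = (s.filter (fun x => x < r)).max' hne := dif_pos hne
  rw [heq]
  have hmem := Finset.max'_mem _ hne
  rw [Finset.mem_filter] at hmem
  exact ⟨hmem.1, hmem.2, fun w hw hrw =>
    Finset.le_max' (s.filter (fun x => x < r)) w (Finset.mem_filter.mpr ⟨hw, hrw⟩)⟩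

set_option maxHeartbeats 1000000 in
lemma minS_spec (s : Finset (Fin (n+1))) (hne : s.Nonempty) :
    minS s ∈ s ∧ ∀ w ∈ s, minS s ≤ w := by
  have heq : minS s = s.min' hne := dif_pos hne
  rw [heq]
  exact ⟨Finset.min'_mem _ hne, fun w hw => Finset.min'_le _ w hw⟩

lemma nextS_prevS (s : Finset (Fin (n+1))) (r : Fin (n+1)) (hr : r ∈ s)
    (hne : (s.filter (fun x => x < r)).Nonempty) :
    nextS s (prevS s r) = r := by
  obtain ⟨hq1, hq2, hq3⟩ := prevS_spec s r hne
  have hne2 : (s.filter (fun x => prevS s r < x)).Nonempty :=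
    ⟨r, Finset.mem_filter.mpr ⟨hr, hq2⟩⟩
  obtain ⟨hn1, hn2, hn3⟩ := nextS_spec s (prevS s r) hne2
  refine le_antisymm (hn3 r hr hq2) ?_
  by_contra hc
  push_neg at hc
  exact absurd (hq3 _ hn1 hc) (not_le.mpr hn2)

lemma prevS_nextS (s : Finset (Fin (n+1))) (r : Fin (n+1)) (hr : r ∈ s)
    (hne : (s.filter (fun x => r < x)).Nonempty) :
    prevS s (nextS s r) = r := by
  obtain ⟨hq1, hq2, hq3⟩ := nextS_spec s r hne
  have hne2 : (s.filter (fun x => x < nextS s r)).Nonempty :=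
    ⟨r, Finset.mem_filter.mpr ⟨hr, hq2⟩⟩
  obtain ⟨hn1, hn2, hn3⟩ := prevS_spec s (nextS s r) hne2
  refine le_antisymm ?_ (hn3 r hr hq2)
  by_contra hc
  push_neg at hc
  exact absurd (hq3 _ hn1 hc) (not_le.mpr hn2)

section TreeCtx

variable (f g : Fin (n+1) → Fin (n+1)) (hn : n ≠ 0)

lemma recSet_nonempty (hn : n ≠ 0) : (recSet f).Nonempty :=
  ⟨Fin.last n, last_mem_recSet f hn⟩

lemma f_minS (hf0 : f 0 = 0) (hconv : ∀ v, ∃ k, f^[k] v = 0) (hn : n ≠ 0) :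
    f (minS (recSet f)) = 0 := by
  obtain ⟨hm1, hm2⟩ := minS_spec (recSet f) (recSet_nonempty f hn)
  have hrec : IsRec0 f (minS (recSet f)) := mem_recSet.mp hm1
  by_contra h
  have hp : IsRec0 f (pathMax f (f (minS (recSet f)))) := pathMax_isRec f _ h
  have hlt := pathMax_f_lt f hf0 hconv _ hrec
  exact absurd (hm2 _ (mem_recSet.mpr hp)) (not_le.mpr hlt)

lemma phi_claim (hf0 : f 0 = 0) (hconv : ∀ v, ∃ k, f^[k] v = 0) (hn : n ≠ 0)
    (hnd : ∀ R R', ¬ DRC f R R') (r : Fin (n+1)) (hr : IsRec0 f r)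
    (hrl : r ≠ Fin.last n) :
    pathMax f (f (nextS (recSet f) r)) < r := by
  have hne : ((recSet f).filter (fun x => r < x)).Nonempty :=
    ⟨Fin.last n, Finset.mem_filter.mpr ⟨last_mem_recSet f hn,
      lt_of_le_of_ne (Fin.le_last r) hrl⟩⟩
  obtain ⟨hs1, hs2, hs3⟩ := nextS_spec (recSet f) r hne
  have hr' : IsRec0 f (nextS (recSet f) r) := mem_recSet.mp hs1
  have hstrict := pathMax_f_lt f hf0 hconv _ hr'
  by_cases h0 : f (nextS (recSet f) r) = 0
  · rw [h0, pathMax_zero f hf0]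
    exact Fin.pos_iff_ne_zero.mpr hr.1
  · have hp : IsRec0 f (pathMax f (f (nextS (recSet f) r))) := pathMax_isRec f _ h0
    have hpr : pathMax f (f (nextS (recSet f) r)) ≤ r := by
      by_contra hc
      push_neg at hc
      exact absurd (hs3 _ (mem_recSet.mpr hp) hc) (not_le.mpr hstrict)
    refine lt_of_le_of_ne hpr ?_
    intro heq
    apply hnd r (nextS (recSet f) r)
    obtain ⟨k, hk⟩ := pathMax_mem f (f (nextS (recSet f) r))
    exact ⟨hr, hr', ⟨k + 1, by rw [Function.iterate_succ_apply, hk]; exact heq⟩, hs2,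
      fun R'' hR'' hlt => hs3 R'' (mem_recSet.mpr hR'') hlt⟩

lemma phi_surgery (hf0 : f 0 = 0) (hconv : ∀ v, ∃ k, f^[k] v = 0) (hn : n ≠ 0)
    (hnd : ∀ R R', ¬ DRC f R R') :
    (∀ v, ∃ k, (Phi f)^[k] v = 0) ∧ (∀ v, pathMax (Phi f) v = pathMax f v) := by
  apply surgery f (Phi f) hf0 hconv
  · intro v hv
    rw [Phi, if_neg hv]
  · intro r hr
    rw [Phi, if_pos hr]
    by_cases hl : r = Fin.last n
    · rw [if_pos hl]; exact Or.inl rfl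
    · rw [if_neg hl]; exact Or.inr (phi_claim f hf0 hconv hn hnd r hr hl)

lemma psi_surgery (hg0 : g 0 = 0) (hgconv : ∀ v, ∃ k, g^[k] v = 0) (hn : n ≠ 0) :
    (∀ v, ∃ k, (Psi g)^[k] v = 0) ∧ (∀ v, pathMax (Psi g) v = pathMax g v) := by
  apply surgery g (Psi g) hg0 hgconv
  · intro v hv
    rw [Psi, if_neg hv]
  · intro r hr
    rw [Psi, if_pos hr]
    by_cases hm : r = minS (recSet g)
    · rw [if_pos hm]; exact Or.inl rfl
    · rw [if_neg hm]
      refine Or.inr ?_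
      have hne : ((recSet g).filter (fun x => x < r)).Nonempty := by
        obtain ⟨hm1, hm2⟩ := minS_spec (recSet g) (recSet_nonempty g hn)
        exact ⟨minS (recSet g), Finset.mem_filter.mpr ⟨hm1,
          lt_of_le_of_ne (hm2 r (mem_recSet.mpr hr)) (Ne.symm hm)⟩⟩
      obtain ⟨hq1, hq2, hq3⟩ := prevS_spec (recSet g) r hne
      exact lt_trans (pathMax_f_lt g hg0 hgconv _ (mem_recSet.mp hq1)) hq2

lemma recSet_phi (hf0 : f 0 = 0) (hconv : ∀ v, ∃ k, f^[k] v = 0) (hn : n ≠ 0)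
    (hnd : ∀ R R', ¬ DRC f R R') : recSet (Phi f) = recSet f := by
  ext v
  rw [mem_recSet, mem_recSet, isRec_iff, isRec_iff, (phi_surgery f hf0 hconv hn hnd).2 v]

lemma recSet_psi (hg0 : g 0 = 0) (hgconv : ∀ v, ∃ k, g^[k] v = 0) (hn : n ≠ 0) :
    recSet (Psi g) = recSet g := by
  ext v
  rw [mem_recSet, mem_recSet, isRec_iff, isRec_iff, (psi_surgery g hg0 hgconv hn).2 v]

lemma psi_noDRC (hg0 : g 0 = 0) (hgconv : ∀ v, ∃ k, g^[k] v = 0) (hn : n ≠ 0) :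
    ∀ R R', ¬ DRC (Psi g) R R' := by
  rintro R R' ⟨hR, hR', ⟨k, hk⟩, hlt, hmin⟩
  have hM := (psi_surgery g hg0 hgconv hn).2
  have hrecs := recSet_psi g hg0 hgconv hn
  have hIsRec : ∀ w, IsRec0 (Psi g) w ↔ IsRec0 g w := by
    intro w
    rw [← mem_recSet, hrecs, mem_recSet]
  have hRg : IsRec0 g R := (hIsRec R).mp hR
  have hR'g : IsRec0 g R' := (hIsRec R').mp hR'
  rcases k with _ | k'
  · exact absurd (hk ▸ hlt) (lt_irrefl R)
  have h1 : R ≤ pathMax (Psi g) (Psi g R') := by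
    rw [Function.iterate_succ_apply] at hk
    exact hk ▸ iterate_le_pathMax (Psi g) (Psi g R') k'
  have hR'min : R' ≠ minS (recSet g) := by
    intro h
    obtain ⟨hm1, hm2⟩ := minS_spec (recSet g) (recSet_nonempty g hn)
    exact absurd (h ▸ hm2 R (mem_recSet.mpr hRg)) (not_le.mpr hlt)
  have hPsiR' : Psi g R' = g (prevS (recSet g) R') := by
    rw [Psi, if_pos hR'g, if_neg hR'min]
  have hne : ((recSet g).filter (fun x => x < R')).Nonempty :=
    ⟨R, Finset.mem_filter.mpr ⟨mem_recSet.mpr hRg, hlt⟩⟩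
  obtain ⟨hq1, hq2, hq3⟩ := prevS_spec (recSet g) R' hne
  have hq : prevS (recSet g) R' = R := by
    refine le_antisymm ?_ (hq3 R (mem_recSet.mpr hRg) hlt)
    by_contra hc
    push_neg at hc
    have := hmin _ ((hIsRec _).mpr (mem_recSet.mp hq1)) hc
    exact absurd this (not_le.mpr hq2)
  rw [hPsiR', hq, hM] at h1
  exact absurd h1 (not_le.mpr (pathMax_f_lt g hg0 hgconv R hRg))

lemma psi_phi (hf0 : f 0 = 0) (hconv : ∀ v, ∃ k, f^[k] v = 0) (hn : n ≠ 0)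
    (hnd : ∀ R R', ¬ DRC f R R') : Psi (Phi f) = f := by
  funext v
  have hrecs := recSet_phi f hf0 hconv hn hnd
  have hIsRec : ∀ w, IsRec0 (Phi f) w ↔ IsRec0 f w := by
    intro w
    rw [← mem_recSet, hrecs, mem_recSet]
  by_cases hv : IsRec0 f v
  · rw [Psi, if_pos ((hIsRec v).mpr hv), hrecs]
    by_cases hm : v = minS (recSet f)
    · rw [if_pos hm, hm, f_minS f hf0 hconv hn]
    · rw [if_neg hm]
      have hne : ((recSet f).filter (fun x => x < v)).Nonempty := by
        obtain ⟨hm1, hm2⟩ := minS_spec (recSet f) (recSet_nonempty f hn)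
        exact ⟨minS (recSet f), Finset.mem_filter.mpr ⟨hm1,
          lt_of_le_of_ne (hm2 v (mem_recSet.mpr hv)) (Ne.symm hm)⟩⟩
      obtain ⟨hq1, hq2, hq3⟩ := prevS_spec (recSet f) v hne
      have hq_rec : IsRec0 f (prevS (recSet f) v) := mem_recSet.mp hq1
      have hq_last : prevS (recSet f) v ≠ Fin.last n :=
        ne_of_lt (lt_of_lt_of_le hq2 (Fin.le_last v))
      rw [Phi, if_pos hq_rec, if_neg hq_last,
        nextS_prevS (recSet f) v (mem_recSet.mpr hv) hne]
  · have hv' : ¬ IsRec0 (Phi f) v := fun h => hv ((hIsRec v).mp h)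
    rw [Psi, if_neg hv', Phi, if_neg hv]

lemma phi_psi (hg0 : g 0 = 0) (hgconv : ∀ v, ∃ k, g^[k] v = 0) (hn : n ≠ 0)
    (hgl : g (Fin.last n) = 0) : Phi (Psi g) = g := by
  funext v
  have hrecs := recSet_psi g hg0 hgconv hn
  have hIsRec : ∀ w, IsRec0 (Psi g) w ↔ IsRec0 g w := by
    intro w
    rw [← mem_recSet, hrecs, mem_recSet]
  by_cases hv : IsRec0 g v
  · rw [Phi, if_pos ((hIsRec v).mpr hv), hrecs]
    by_cases hl : v = Fin.last n
    · rw [if_pos hl, hl, hgl]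
    · rw [if_neg hl]
      have hne : ((recSet g).filter (fun x => v < x)).Nonempty :=
        ⟨Fin.last n, Finset.mem_filter.mpr ⟨last_mem_recSet g hn,
          lt_of_le_of_ne (Fin.le_last v) hl⟩⟩
      obtain ⟨hw1, hw2, hw3⟩ := nextS_spec (recSet g) v hne
      have hw_rec : IsRec0 g (nextS (recSet g) v) := mem_recSet.mp hw1
      have hw_min : nextS (recSet g) v ≠ minS (recSet g) := by
        obtain ⟨hm1, hm2⟩ := minS_spec (recSet g) (recSet_nonempty g hn)
        exact fun h => absurd (h ▸ hm2 v (mem_recSet.mpr hv)) (not_le.mpr hw2)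
      rw [Psi, if_pos hw_rec, if_neg hw_min,
        prevS_nextS (recSet g) v (mem_recSet.mpr hv) hne]
  · have hv' : ¬ IsRec0 (Psi g) v := fun h => hv ((hIsRec v).mp h)
    rw [Phi, if_neg hv', Psi, if_neg hv]

lemma phi_zero (hf0 : f 0 = 0) : Phi f 0 = 0 := by
  rw [Phi, if_neg (fun h => h.1 rfl), hf0]

lemma psi_zero (hg0 : g 0 = 0) : Psi g 0 = 0 := by
  rw [Psi, if_neg (fun h => h.1 rfl), hg0]

lemma phi_last (hn : n ≠ 0) : Phi f (Fin.last n) = 0 := by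
  rw [Phi, if_pos ⟨last_ne_zero hn, fun _ => Fin.le_last _⟩, if_pos rfl]

end TreeCtx

noncomputable def toC (f : Fin (n+1) → Fin (n+1)) : Fin (n+1) → Fin (n+1) :=
  fun v => if v = Fin.last n then Fin.last n else f v

noncomputable def fromC (h : Fin (n+1) → Fin (n+1)) : Fin (n+1) → Fin (n+1) :=
  fun v => if v = Fin.last n then 0 else h v

lemma toC_conv (f : Fin (n+1) → Fin (n+1)) (hf0 : f 0 = 0)
    (hconv : ∀ v, ∃ k, f^[k] v = 0) (hn : n ≠ 0) :
    Conv ({0, Fin.last n} : Finset (Fin (n+1))) (toC f) := by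
  have h0l : (0 : Fin (n+1)) ≠ Fin.last n := Ne.symm (last_ne_zero hn)
  constructor
  · intro r hr
    rcases Finset.mem_insert.mp hr with h | h
    · subst h
      rw [toC]
      simp only [if_neg h0l]
      exact hf0
    · rw [Finset.mem_singleton] at h
      subst h
      simp [toC]
  · have aux : ∀ k (v : Fin (n+1)), f^[k] v = 0 →
        ∃ j, (toC f)^[j] v ∈ ({0, Fin.last n} : Finset (Fin (n+1))) := by
      intro k
      induction k with
      | zero =>
        intro v hv
        rw [Function.iterate_zero_apply] at hv
        exact ⟨0, by rw [Function.iterate_zero_apply, hv]; simp⟩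
      | succ k ih =>
        intro v hv
        by_cases hl : v = Fin.last n
        · exact ⟨0, by rw [Function.iterate_zero_apply, hl]; simp⟩
        · have hstep : toC f v = f v := by rw [toC]; simp only [if_neg hl]
          have : f^[k] (f v) = 0 := by rw [← Function.iterate_succ_apply]; exact hv
          obtain ⟨j, hj⟩ := ih (f v) this
          exact ⟨j + 1, by rw [Function.iterate_succ_apply, hstep]; exact hj⟩
    intro v
    obtain ⟨k, hk⟩ := hconv v
    exact aux k v hk

lemma fromC_props (h : Fin (n+1) → Fin (n+1))
    (hc : Conv ({0, Fin.last n} : Finset (Fin (n+1))) h) (hn : n ≠ 0) :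
    fromC h 0 = 0 ∧ (∀ v, ∃ k, (fromC h)^[k] v = 0) ∧ fromC h (Fin.last n) = 0 := by
  have h0l : (0 : Fin (n+1)) ≠ Fin.last n := Ne.symm (last_ne_zero hn)
  have hfix0 : h 0 = 0 := hc.1 0 (Finset.mem_insert_self _ _)
  refine ⟨?_, ?_, ?_⟩
  · rw [fromC]
    simp only [if_neg h0l]
    exact hfix0
  · have aux2 : ∀ k (v : Fin (n+1)), h^[k] v ∈ ({0, Fin.last n} : Finset (Fin (n+1))) →
        ∃ j, (fromC h)^[j] v = 0 := by
      intro k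
      induction k with
      | zero =>
        intro v hv
        rw [Function.iterate_zero_apply] at hv
        rcases Finset.mem_insert.mp hv with hv | hv
        · exact ⟨0, hv⟩
        · rw [Finset.mem_singleton] at hv
          refine ⟨1, ?_⟩
          rw [Function.iterate_one, fromC]
          simp only [if_pos hv]
      | succ k ih =>
        intro v hv
        by_cases hl : v = Fin.last n
        · exact ⟨1, by rw [Function.iterate_one, fromC]; simp only [if_pos hl]⟩
        · have hstep : fromC h v = h v := by rw [fromC]; simp only [if_neg hl]
          have : h^[k] (h v) ∈ ({0, Fin.last n} : Finset (Fin (n+1))) := by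
            rw [← Function.iterate_succ_apply]; exact hv
          obtain ⟨j, hj⟩ := ih (h v) this
          exact ⟨j + 1, by rw [Function.iterate_succ_apply, hstep]; exact hj⟩
    intro v
    obtain ⟨k, hk⟩ := hc.2 v
    exact aux2 k v hk
  · simp [fromC]

lemma fromC_toC (f : Fin (n+1) → Fin (n+1)) (hfl : f (Fin.last n) = 0) :
    fromC (toC f) = f := by
  funext v
  by_cases hl : v = Fin.last n
  · rw [fromC]
    simp only [if_pos hl]
    rw [hl, hfl]
  · rw [fromC, toC]
    simp only [if_neg hl]

lemma toC_fromC (h : Fin (n+1) → Fin (n+1))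
    (hc : Conv ({0, Fin.last n} : Finset (Fin (n+1))) h) :
    toC (fromC h) = h := by
  have hfixl : h (Fin.last n) = Fin.last n := hc.1 _ (by simp)
  funext v
  by_cases hl : v = Fin.last n
  · rw [toC]
    simp only [if_pos hl]
    rw [hl, hfixl]
  · rw [toC, fromC]
    simp only [if_neg hl]


end Rec17


/-- The number of rooted trees on `{0,1,…,n}` rooted at `0` with no doubly
record-covering pair equals `2(n+1)^(n-2)`, for `n ≥ 2`. -/
theorem stmt17 (n : ℕ) (hn : 2 ≤ n) :
    Nat.card {f : Fin (n + 1) → Fin (n + 1) //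
        f 0 = 0 ∧ (∀ v, ∃ k, f^[k] v = 0) ∧ ∀ R R', ¬ DRC f R R'} =
      2 * (n + 1) ^ (n - 2) := by
  classical
  have hn0 : n ≠ 0 := by omega
  have h0l : (0 : Fin (n+1)) ≠ Fin.last n := Ne.symm (Rec17.last_ne_zero hn0)
  have e1 : {f : Fin (n + 1) → Fin (n + 1) //
      f 0 = 0 ∧ (∀ v, ∃ k, f^[k] v = 0) ∧ ∀ R R', ¬ DRC f R R'} ≃
      {g : Fin (n + 1) → Fin (n + 1) //
      g 0 = 0 ∧ (∀ v, ∃ k, g^[k] v = 0) ∧ g (Fin.last n) = 0} := by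
    refine ⟨fun x => ⟨Rec17.Phi x.1, ?_, ?_, ?_⟩, fun y => ⟨Rec17.Psi y.1, ?_, ?_, ?_⟩, ?_, ?_⟩
    · exact Rec17.phi_zero x.1 x.2.1
    · exact (Rec17.phi_surgery x.1 x.2.1 x.2.2.1 hn0 x.2.2.2).1
    · exact Rec17.phi_last x.1 hn0
    · exact Rec17.psi_zero y.1 y.2.1
    · exact (Rec17.psi_surgery y.1 y.2.1 y.2.2.1 hn0).1
    · exact Rec17.psi_noDRC y.1 y.2.1 y.2.2.1 hn0
    · intro x
      exact Subtype.ext (Rec17.psi_phi x.1 x.2.1 x.2.2.1 hn0 x.2.2.2)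
    · intro y
      exact Subtype.ext (Rec17.phi_psi y.1 y.2.1 y.2.2.1 hn0 y.2.2.2)
  have e2 : {g : Fin (n + 1) → Fin (n + 1) //
      g 0 = 0 ∧ (∀ v, ∃ k, g^[k] v = 0) ∧ g (Fin.last n) = 0} ≃
      {h : Fin (n + 1) → Fin (n + 1) //
        Conv ({0, Fin.last n} : Finset (Fin (n+1))) h} := by
    refine ⟨fun x => ⟨Rec17.toC x.1, Rec17.toC_conv x.1 x.2.1 x.2.2.1 hn0⟩,
      fun y => ⟨Rec17.fromC y.1, ?_, (Rec17.fromC_props y.1 y.2 hn0).2.1,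
        (Rec17.fromC_props y.1 y.2 hn0).2.2⟩, ?_, ?_⟩
    · exact (Rec17.fromC_props y.1 y.2 hn0).1
    · intro x
      exact Subtype.ext (Rec17.fromC_toC x.1 x.2.2.2)
    · intro y
      exact Subtype.ext (Rec17.toC_fromC y.1 y.2)
  rw [Nat.card_congr (e1.trans e2)]
  rw [conv_count (n+1) (Fin (n+1)) ({0, Fin.last n} : Finset (Fin (n+1)))
    (Fintype.card_fin (n+1))]
  have hcard2 : ({0, Fin.last n} : Finset (Fin (n+1))).card = 2 := by
    rw [Finset.card_insert_of_notMem (by rw [Finset.mem_singleton]; exact h0l),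
      Finset.card_singleton]
  have hne_univ : ({0, Fin.last n} : Finset (Fin (n+1))) ≠ Finset.univ := by
    intro h
    have := congrArg Finset.card h
    rw [hcard2, Finset.card_univ, Fintype.card_fin] at this
    omega
  rw [if_neg hne_univ, hcard2]
  have : n + 1 - 2 - 1 = n - 2 := by omega
  rw [this]
end Forest
end
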